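/- arXiv:2312.10845 — 5 statements merged into one kernel-verified Lean document; each statement's English description precedes it below -/
import Mathlib

section
/- Let 𝒞 ⊆ 𝔞 be a nonempty finitely generated convex set, F a face of 𝒞 with F ≠ 𝒞, and X_F a point of the relative interior of F. Then the relative interior 𝔞_F^+ of the normal cone N_𝒞(X_F) is given by 𝔞_F^+ = {Y ∈ 𝔞 : (Y, H − X_F) < 0 for all H ∈ 𝒞 ∖ F}. -/
open Pointwise

variable {E : Type*} [NormedAddCommGroup E] [InnerProductSpace ℝ E] [FiniteDimensional ℝ E]

/-- A finitely generated convex set: a finite intersection of closed half-spaces. -/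
def IsFGConvex (C : Set E) : Prop :=
  ∃ s : Finset (E × ℝ), C = {X | ∀ p ∈ s, (inner ℝ p.1 X : ℝ) ≤ p.2}

/-- The tangent cone `T_C(H) = ℝ≥0 · (C - H)`. -/
def tangCone (C : Set E) (H : E) : Set E :=
  {X | ∃ t : ℝ, 0 ≤ t ∧ ∃ c ∈ C, X = t • (c - H)}

/-- The normal cone `N_C(H) = {Y | (Y,X) ≤ 0 for all X ∈ T_C(H)}`. -/
def normCone (C : Set E) (H : E) : Set E :=
  {Y | ∀ X ∈ tangCone C H, (inner ℝ Y X : ℝ) ≤ 0}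

/-- A face of `C`: the (nonempty) intersection of `C` with a supporting affine hyperplane
`{H | (λ,H) = c}`, where `(λ,H) ≤ c` on all of `C` (the case `λ = 0` being allowed). -/
def IsFace (C F : Set E) : Prop :=
  F.Nonempty ∧ ∃ (lam : E) (c : ℝ), (∀ H ∈ C, (inner ℝ lam H : ℝ) ≤ c) ∧
    F = {H | H ∈ C ∧ (inner ℝ lam H : ℝ) = c}

/-! Let `K = T_𝒞(X_F)`. For the constraints `(a, X) ≤ b` of `𝒞` active at `X_F`, `K` is the
polyhedral cone `{X | (a, X) ≤ 0}` and `N_𝒞(X_F)` is its polar `K°`. As `X_F` is relatively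
interior in `F`, a point `H ∈ 𝒞` lies in `F` iff `X_F - H ∈ K`, so the positive multiples of
`H - X_F`, `H ∈ 𝒞 ∖ F`, are exactly `K ∖ (-K)`, which is nonempty as `F ≠ 𝒞`. It remains to see
that the relative interior of `K°` consists of the `Y` with `(Y, X) < 0` on `K ∖ (-K)`.

Such a `Y` is negative on the compact slice of `K` by the unit sphere of the orthogonal complement
of the lineality space `K ∩ (-K)`, hence so are all nearby `Z`; those in the span of `K°`, which is
orthogonal to `K ∩ (-K)`, lie in `K°`. Conversely every active normal `a` lies in `K°`; if
`(a, X) < 0` then `Y + ε (Y - a) ∈ K°` forces `(Y, X) < 0`. -/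

open Filter Topology
open scoped RealInnerProductSpace

section

variable {V : Type*} [NormedAddCommGroup V] [NormedSpace ℝ V] {s : Set V} {x : V}

theorem exists_pos_add_smul_sub_mem_of_mem_intrinsicInterior {y : V}
    (hx : x ∈ intrinsicInterior ℝ s) (hy : y ∈ s) : ∃ ε : ℝ, 0 < ε ∧ x + ε • (x - y) ∈ s := by
  obtain ⟨z, hz, rfl⟩ := mem_intrinsicInterior.1 hx
  have hline (t : ℝ) : (z : V) + t • ((z : V) - y) ∈ affineSpan ℝ s := by
    simpa [vsub_eq_sub, vadd_eq_add, add_comm] using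
      (affineSpan ℝ s).smul_vsub_vadd_mem' t z.2 (subset_affineSpan ℝ s hy) z.2
  let γ : ℝ → affineSpan ℝ s := fun t => ⟨_, hline t⟩
  have hγ : Continuous γ := by fun_prop
  have hγ0 : γ 0 = z := by ext; simp [γ]
  have hev : ∀ᶠ t in 𝓝[>] 0, γ t ∈ interior ((↑) ⁻¹' s) :=
    nhdsWithin_le_nhds <| hγ.continuousAt.preimage_mem_nhds (hγ0 ▸ isOpen_interior.mem_nhds hz)
  obtain ⟨ε, hε, hεpos⟩ := (hev.and self_mem_nhdsWithin).exists
  exact ⟨ε, hεpos, interior_subset (s := ((↑) ⁻¹' s : Set (affineSpan ℝ s))) hε⟩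

theorem mem_intrinsicInterior_of_eventually (hx : x ∈ s)
    (h : ∀ᶠ z in 𝓝 x, z ∈ affineSpan ℝ s → z ∈ s) : x ∈ intrinsicInterior ℝ s := by
  refine mem_intrinsicInterior.2 ⟨⟨x, subset_affineSpan ℝ s hx⟩, ?_, rfl⟩
  rw [mem_interior_iff_mem_nhds]
  filter_upwards [continuous_subtype_val.continuousAt.preimage_mem_nhds h] with z hz
  exact hz z.2

end

section

variable {V : Type*} [NormedAddCommGroup V] [InnerProductSpace ℝ V]

/-- The polar cone `S°`, i.e. the negative of `ProperCone.innerDual S`. -/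
def polarCone (S : Set V) : PointedCone ℝ V where
  carrier := {Y | ∀ X ∈ S, ⟪Y, X⟫ ≤ 0}
  add_mem' {Y Y'} hY hY' X hX := by
    rw [inner_add_left]
    linarith [hY X hX, hY' X hX]
  zero_mem' X _ := by simp
  smul_mem' c Y hY X hX := by
    change ⟪(c : ℝ) • Y, X⟫ ≤ 0
    rw [real_inner_smul_left]
    exact mul_nonpos_of_nonneg_of_nonpos c.2 (hY X hX)

theorem mem_polarCone {S : Set V} {Y : V} : Y ∈ polarCone S ↔ ∀ X ∈ S, ⟪Y, X⟫ ≤ 0 := Iff.rfl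

theorem normCone_eq_polarCone (C : Set V) (x : V) : normCone C x = polarCone (tangCone C x) := rfl

theorem subset_polarCone_polarCone (S : Set V) : S ⊆ polarCone (polarCone S : Set V) :=
  fun a ha X hX => real_inner_comm X a ▸ hX a ha

theorem isClosed_polarCone (S : Set V) : IsClosed (polarCone S : Set V) := by
  have : (polarCone S : Set V) = ⋂ X ∈ S, {Y | ⟪Y, X⟫ ≤ 0} := by ext; simp [mem_polarCone]
  rw [this]
  exact isClosed_biInter fun X _ => isClosed_le (by fun_prop) continuous_const

theorem polarCone_subset_orthogonal_lineal (K : PointedCone ℝ V) :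
    (polarCone (K : Set V) : Set V) ⊆ (K.lineal)ᗮ := by
  intro Z hZ w hw
  rw [PointedCone.mem_lineal] at hw
  have h₁ := hZ w hw.1
  have h₂ := hZ (-w) hw.2
  rw [inner_neg_right] at h₂
  rw [real_inner_comm]
  linarith

theorem mem_polarCone_of_forall_inner_lt_zero {K : PointedCone ℝ V} {Y X₀ : V}
    (hX₀ : X₀ ∈ K) (hX₀' : -X₀ ∉ K) (hY : ∀ X ∈ K, -X ∉ K → ⟪Y, X⟫ < 0) :
    Y ∈ polarCone K := by
  have hY₀ : ⟪Y, X₀⟫ < 0 := hY X₀ hX₀ hX₀'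
  intro X hX
  by_contra! hpos
  -- `Y` vanishes on `X + t X₀`, which lies in `K` but not in `-K`.
  set t := ⟪Y, X⟫ / -⟪Y, X₀⟫ with ht
  have htpos : 0 < t := div_pos hpos (neg_pos.2 hY₀)
  have hmem : X + t • X₀ ∈ K := K.add_mem hX (K.smul_mem htpos.le hX₀)
  have hnmem : -(X + t • X₀) ∉ K := by
    intro h
    have h' : -(t • X₀) ∈ K := by simpa using K.add_mem h hX
    apply hX₀'
    convert K.smul_mem (inv_pos.2 htpos).le h' using 1
    rw [smul_neg, smul_smul, inv_mul_cancel₀ htpos.ne', one_smul]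
  have hzero : ⟪Y, X + t • X₀⟫ = 0 := by
    rw [inner_add_right, real_inner_smul_right, ht]
    field_simp [hY₀.ne]
    ring
  exact (hY _ hmem hnmem).ne hzero

theorem mem_polarCone_of_mem_orthogonal_lineal [FiniteDimensional ℝ V] {K : PointedCone ℝ V}
    {Z : V} (hZ : Z ∈ (K.lineal)ᗮ) (h : ∀ x ∈ K, x ∈ (K.lineal)ᗮ → ⟪Z, x⟫ ≤ 0) :
    Z ∈ polarCone K := by
  intro X hX
  set w := K.lineal.starProjection X
  have hw : w ∈ K.lineal := K.lineal.starProjection_apply_mem X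
  have hXw : X - w ∈ K := by
    simpa [sub_eq_add_neg] using K.add_mem hX (PointedCone.mem_lineal.1 hw).2
  calc ⟪Z, X⟫ = ⟪Z, X - w⟫ := by
        rw [inner_sub_right, Submodule.inner_left_of_mem_orthogonal hw hZ, sub_zero]
    _ ≤ 0 := h _ hXw (Submodule.sub_starProjection_mem_orthogonal X)

theorem eventually_mem_polarCone [FiniteDimensional ℝ V] {K : PointedCone ℝ V} {Y : V}
    (hK : IsClosed (K : Set V)) (hY : ∀ X ∈ K, -X ∉ K → ⟪Y, X⟫ < 0) :
    ∀ᶠ Z in 𝓝 Y, Z ∈ (K.lineal)ᗮ → Z ∈ polarCone K := by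
  set slice := (K : Set V) ∩ (K.lineal)ᗮ ∩ Metric.sphere 0 1
  have hslice : IsCompact slice :=
    (isCompact_sphere 0 1).inter_left (hK.inter (Submodule.isClosed_orthogonal _))
  have hneg : ∀ x ∈ slice, ⟪Y, x⟫ < 0 := by
    rintro x ⟨⟨hxK, hxL⟩, hx₁⟩
    refine hY x hxK fun hx' => ?_
    have hx₀ : x = 0 := inner_self_eq_zero.1 <|
      Submodule.inner_right_of_mem_orthogonal (PointedCone.mem_lineal.2 ⟨hxK, hx'⟩) hxL
    simp [hx₀] at hx₁
  have hev : ∀ᶠ Z in 𝓝 Y, ∀ x ∈ slice, ⟪Z, x⟫ < 0 :=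
    hslice.eventually_forall_of_forall_eventually fun x hx =>
      continuous_inner.continuousAt.eventually_lt continuousAt_const (hneg x hx)
  filter_upwards [hev] with Z hZ hZL
  refine mem_polarCone_of_mem_orthogonal_lineal hZL fun x hxK hxL => ?_
  rcases eq_or_ne x 0 with rfl | hx₀
  · simp
  have hunit : ‖x‖⁻¹ • x ∈ slice :=
    ⟨⟨K.smul_mem (inv_nonneg.2 (norm_nonneg x)) hxK, Submodule.smul_mem _ _ hxL⟩,
      by simp [norm_smul, hx₀]⟩
  have := hZ _ hunit
  rw [real_inner_smul_right] at this
  exact (neg_of_mul_neg_right this (inv_nonneg.2 (norm_nonneg x))).le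

theorem inner_lt_zero_of_mem_intrinsicInterior_polarCone {S : Set V} {X Y : V}
    (hY : Y ∈ intrinsicInterior ℝ (polarCone (polarCone S : Set V) : Set V))
    (hX : X ∈ polarCone S) (hX' : -X ∉ polarCone S) : ⟪Y, X⟫ < 0 := by
  obtain ⟨a, ha, hXa⟩ : ∃ a ∈ S, 0 < ⟪-X, a⟫ := by simpa [mem_polarCone] using hX'
  obtain ⟨ε, hε, hmem⟩ := exists_pos_add_smul_sub_mem_of_mem_intrinsicInterior hY
    (subset_polarCone_polarCone S ha)
  have h₁ : ⟪Y, X⟫ ≤ 0 := intrinsicInterior_subset hY X hX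
  have h₂ := hmem X hX
  rw [inner_add_left, real_inner_smul_left, inner_sub_left] at h₂
  rw [inner_neg_left, real_inner_comm] at hXa
  nlinarith

theorem intrinsicInterior_polarCone_polarCone [FiniteDimensional ℝ V] {S : Set V} {X₀ : V}
    (hX₀ : X₀ ∈ polarCone S) (hX₀' : -X₀ ∉ polarCone S) :
    intrinsicInterior ℝ (polarCone (polarCone S : Set V) : Set V)
      = {Y | ∀ X ∈ polarCone S, -X ∉ polarCone S → ⟪Y, X⟫ < 0} := by
  ext Y
  refine ⟨fun hY X hX hX' => inner_lt_zero_of_mem_intrinsicInterior_polarCone hY hX hX',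
    fun hY => ?_⟩
  have hspan : affineSpan ℝ (polarCone (polarCone S : Set V) : Set V)
      ≤ ((polarCone S).lineal)ᗮ.toAffineSubspace :=
    affineSpan_le.2 (polarCone_subset_orthogonal_lineal _)
  refine mem_intrinsicInterior_of_eventually (mem_polarCone_of_forall_inner_lt_zero hX₀ hX₀' hY) ?_
  filter_upwards [eventually_mem_polarCone (isClosed_polarCone S) hY] with Z hZ hZspan
  exact hZ (hspan hZspan)

def halfspaces (s : Finset (V × ℝ)) : Set V := {X | ∀ p ∈ s, ⟪p.1, X⟫ ≤ p.2}

def activeNormals (s : Finset (V × ℝ)) (x : V) : Set V := {a | ∃ b, (a, b) ∈ s ∧ ⟪a, x⟫ = b}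

theorem exists_pos_add_smul_mem_halfspaces {s : Finset (V × ℝ)} {x X : V}
    (hx : x ∈ halfspaces s) (hX : ∀ a ∈ activeNormals s x, ⟪a, X⟫ ≤ 0) :
    ∃ ε : ℝ, 0 < ε ∧ x + ε • X ∈ halfspaces s := by
  suffices h : ∀ᶠ ε in 𝓝[>] (0 : ℝ), x + ε • X ∈ halfspaces s from
    (eventually_mem_nhdsWithin.and h).exists
  refine (eventually_all_finset s).2 fun p hp => ?_
  rcases (hx p hp).lt_or_eq with hlt | heq
  · have hcont : ContinuousAt (fun ε : ℝ => ⟪p.1, x + ε • X⟫) 0 := by fun_prop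
    filter_upwards [nhdsWithin_le_nhds (hcont.eventually_lt continuousAt_const (by simpa using hlt))]
      with ε hε using hε.le
  · filter_upwards [self_mem_nhdsWithin] with ε (hε : 0 < ε)
    rw [inner_add_right, real_inner_smul_right]
    nlinarith [hX p.1 ⟨p.2, hp, heq⟩]

theorem tangCone_halfspaces {s : Finset (V × ℝ)} {x : V} (hx : x ∈ halfspaces s) :
    tangCone (halfspaces s) x = polarCone (activeNormals s x) := by
  ext X
  constructor
  · rintro ⟨t, ht, c, hc, rfl⟩ a ⟨b, hab, rfl⟩
    rw [real_inner_smul_left, inner_sub_left, real_inner_comm a c, real_inner_comm a x]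
    exact mul_nonpos_of_nonneg_of_nonpos ht (by linarith [hc _ hab])
  · intro hX
    obtain ⟨ε, hε, hmem⟩ :=
      exists_pos_add_smul_mem_halfspaces hx fun a ha => real_inner_comm a X ▸ hX a ha
    refine ⟨ε⁻¹, (inv_pos.2 hε).le, _, hmem, ?_⟩
    rw [add_sub_cancel_left, smul_smul, inv_mul_cancel₀ hε.ne', one_smul]

variable {C F : Set V} {x : V}

theorem sub_mem_tangCone {c : V} (hc : c ∈ C) : c - x ∈ tangCone C x :=
  ⟨1, zero_le_one, c, hc, (one_smul _ _).symm⟩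

theorem smul_mem_tangCone {X : V} {t : ℝ} (ht : 0 ≤ t) (hX : X ∈ tangCone C x) :
    t • X ∈ tangCone C x := by
  obtain ⟨u, hu, c, hc, rfl⟩ := hX
  exact ⟨t * u, mul_nonneg ht hu, c, hc, smul_smul t u _⟩

theorem IsFace.subset (hF : IsFace C F) : F ⊆ C := by
  obtain ⟨-, lam, c, -, rfl⟩ := hF
  exact fun H hH => hH.1

theorem IsFace.mem_iff_sub_mem_tangCone (hF : IsFace C F) (hx : x ∈ intrinsicInterior ℝ F)
    {H : V} (hH : H ∈ C) : H ∈ F ↔ x - H ∈ tangCone C x := by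
  constructor
  · intro hHF
    obtain ⟨ε, hε, hmem⟩ := exists_pos_add_smul_sub_mem_of_mem_intrinsicInterior hx hHF
    refine ⟨ε⁻¹, (inv_pos.2 hε).le, _, hF.subset hmem, ?_⟩
    rw [add_sub_cancel_left, smul_smul, inv_mul_cancel₀ hε.ne', one_smul]
  · rintro ⟨t, ht, c, hc, hxH⟩
    obtain ⟨-, lam, c₀, hle, rfl⟩ := hF
    have hxF := intrinsicInterior_subset hx
    refine ⟨hH, le_antisymm (hle H hH) ?_⟩
    have := congrArg (inner ℝ lam) hxH
    rw [inner_sub_right, real_inner_smul_right, inner_sub_right, hxF.2] at this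
    nlinarith [hle c hc]

theorem IsFace.forall_inner_sub_lt_zero_iff (hF : IsFace C F) (hx : x ∈ intrinsicInterior ℝ F)
    (Y : V) : (∀ H ∈ C \ F, ⟪Y, H - x⟫ < 0) ↔
      ∀ X ∈ tangCone C x, -X ∉ tangCone C x → ⟪Y, X⟫ < 0 := by
  constructor
  · rintro hY _ ⟨t, ht, c, hc, rfl⟩ hX'
    rcases ht.lt_or_eq with htpos | rfl
    · have hcF : c ∉ F := fun hcF => hX' <| by
        rw [← smul_neg, neg_sub]
        exact smul_mem_tangCone ht ((hF.mem_iff_sub_mem_tangCone hx hc).1 hcF)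
      rw [real_inner_smul_right]
      exact mul_neg_of_pos_of_neg htpos (hY c ⟨hc, hcF⟩)
    · refine absurd ?_ hX'
      simpa using sub_mem_tangCone (x := x) (hF.subset (intrinsicInterior_subset hx))
  · rintro hY H ⟨hHC, hHF⟩
    refine hY _ (sub_mem_tangCone hHC) ?_
    rwa [neg_sub, ← hF.mem_iff_sub_mem_tangCone hx hHC]

end

theorem stmt_3_general (C F : Set E) (hC : IsFGConvex C)
    (hF : IsFace C F) (hFC : F ≠ C)
    (XF : E) (hXF : XF ∈ intrinsicInterior ℝ F) :
    intrinsicInterior ℝ (normCone C XF)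
      = {Y | ∀ H ∈ C \ F, (inner ℝ Y (H - XF) : ℝ) < 0} := by
  obtain ⟨s, hs⟩ := hC
  change C = halfspaces s at hs
  subst hs
  have hT := tangCone_halfspaces (hF.subset (intrinsicInterior_subset hXF))
  obtain ⟨H₀, hH₀C, hH₀F⟩ := Set.exists_of_ssubset (hF.subset.ssubset_of_ne hFC)
  have hX₀ : H₀ - XF ∈ (polarCone (activeNormals s XF) : Set E) := hT ▸ sub_mem_tangCone hH₀C
  have hX₀' : -(H₀ - XF) ∉ (polarCone (activeNormals s XF) : Set E) := by
    rwa [← hT, neg_sub, ← hF.mem_iff_sub_mem_tangCone hXF hH₀C]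
  rw [normCone_eq_polarCone, hT, intrinsicInterior_polarCone_polarCone hX₀ hX₀']
  ext Y
  rw [Set.mem_ofPred_eq, Set.mem_ofPred_eq, hF.forall_inner_sub_lt_zero_iff hXF, hT]
  simp only [SetLike.mem_coe]

theorem stmt_3 (C F : Set E) (hC : IsFGConvex C) (hne : C.Nonempty)
    (hF : IsFace C F) (hFC : F ≠ C)
    (XF : E) (hXF : XF ∈ intrinsicInterior ℝ F) :
    intrinsicInterior ℝ (normCone C XF)
      = {Y | ∀ H ∈ C \ F, (inner ℝ Y (H - XF) : ℝ) < 0} :=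
  stmt_3_general C F hC hF hFC XF hXF
end

section
/- Let E be a strictly convex real normed vector space and γ : E → E an isometry. Let x ∈ E and assume there exists z ∈ E with ‖z − γ z‖ < ‖x − γ x‖. Then for every point y in the open segment ]x, γ x[, one has ‖y − γ y‖ < ‖x − γ x‖. -/
/-- Key step: if a point `x + t • v` (with `v = γ x - x`, `0 < t < 1`) has displacement
equal to `‖v‖`, then `γ` translates this point and `γ x` by `v`-compatible amounts. -/
lemma stmt_9_key {E : Type*} [NormedAddCommGroup E] [NormedSpace ℝ E] [StrictConvexSpace ℝ E]
    (γ : E → E) (hγ : Isometry γ) (x : E) (t : ℝ) (ht0 : 0 < t) (ht1 : t < 1)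
    (hv : γ x - x ≠ 0)
    (hyd : ‖(x + t • (γ x - x)) - γ (x + t • (γ x - x))‖ = ‖γ x - x‖) :
    γ (x + t • (γ x - x)) = γ x + t • (γ x - x) ∧ γ (γ x) = γ x + (γ x - x) := by
  have hd : ∀ a b : E, ‖γ a - γ b‖ = ‖a - b‖ := fun a b => by
    rw [← dist_eq_norm, ← dist_eq_norm, hγ.dist_eq]
  set v := γ x - x with hvdef
  set y := x + t • v with hydef
  have hvn : (0:ℝ) < ‖v‖ := norm_pos_iff.mpr hv
  have h1 : y - γ x = (t - 1) • v := by rw [hydef, hvdef]; module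
  have h1n : ‖y - γ x‖ = (1 - t) * ‖v‖ := by
    rw [h1, norm_smul, Real.norm_eq_abs, abs_of_neg (by linarith : t - 1 < 0)]; ring
  have h2n : ‖γ x - γ y‖ = t * ‖v‖ := by
    rw [hd, hydef]
    have h : x - (x + t • v) = -(t • v) := by module
    rw [h, norm_neg, norm_smul, Real.norm_eq_abs, abs_of_pos ht0]
  have hsum : ‖(y - γ x) + (γ x - γ y)‖ = ‖y - γ x‖ + ‖γ x - γ y‖ := by
    have h : (y - γ x) + (γ x - γ y) = y - γ y := by abel
    rw [h, hyd, h1n, h2n]; ring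
  have hray : SameRay ℝ (y - γ x) (γ x - γ y) := sameRay_iff_norm_add.mpr hsum
  have h1ne : y - γ x ≠ 0 := by
    intro h; rw [h, norm_zero] at h1n; nlinarith
  obtain ⟨c, hc0, hc⟩ := hray.exists_nonneg_left h1ne
  have hcval : c * (1 - t) = t := by
    have h : ‖c • (y - γ x)‖ = t * ‖v‖ := by rw [hc, h2n]
    rw [norm_smul, Real.norm_eq_abs, abs_of_nonneg hc0, h1n] at h
    refine mul_right_cancel₀ hvn.ne' ?_
    rw [← h]; ring
  have hgy : γ y = γ x + t • v := by
    have h3 : γ x - γ y = (c * (t - 1)) • v := by rw [← hc, h1, smul_smul]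
    have h4 : c * (t - 1) = -t := by linear_combination -hcval
    rw [h4] at h3
    have h : γ y = γ x - (-t) • v := by rw [← h3]; abel
    rw [h]; module
  refine ⟨hgy, ?_⟩
  have h5 : γ x - γ y = (-t) • v := by rw [hgy]; module
  have h6n : ‖γ y - γ (γ x)‖ = (1 - t) * ‖v‖ := by rw [hd, h1n]
  have h7n : ‖γ x - γ (γ x)‖ = ‖v‖ := by rw [hd, norm_sub_rev, ← hvdef]
  have hsum2 : ‖(γ x - γ y) + (γ y - γ (γ x))‖ = ‖γ x - γ y‖ + ‖γ y - γ (γ x)‖ := by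
    have h : (γ x - γ y) + (γ y - γ (γ x)) = γ x - γ (γ x) := by abel
    rw [h, h7n, h2n, h6n]; ring
  have hray2 : SameRay ℝ (γ x - γ y) (γ y - γ (γ x)) := sameRay_iff_norm_add.mpr hsum2
  have h5ne : γ x - γ y ≠ 0 := by
    intro h; rw [h, norm_zero] at h2n; nlinarith
  obtain ⟨c', hc'0, hc'⟩ := hray2.exists_nonneg_left h5ne
  have hc'val : c' * t = 1 - t := by
    have h : ‖c' • (γ x - γ y)‖ = (1 - t) * ‖v‖ := by rw [hc', h6n]
    rw [norm_smul, Real.norm_eq_abs, abs_of_nonneg hc'0, h2n] at h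
    refine mul_right_cancel₀ hvn.ne' ?_
    rw [← h]; ring
  have h8 : γ y - γ (γ x) = (c' * (-t)) • v := by rw [← hc', h5, smul_smul]
  have h9 : c' * (-t) = t - 1 := by linear_combination -hc'val
  rw [h9] at h8
  have h : γ (γ x) = γ y - (t - 1) • v := by rw [← h8]; abel
  rw [h, hgy]; module

theorem stmt_9 {E : Type*} [NormedAddCommGroup E] [NormedSpace ℝ E] [StrictConvexSpace ℝ E]
    (γ : E → E) (hγ : Isometry γ) (x : E)
    (hx : ∃ z : E, ‖z - γ z‖ < ‖x - γ x‖) :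
    ∀ y ∈ openSegment ℝ x (γ x), ‖y - γ y‖ < ‖x - γ x‖ := by
  obtain ⟨z, hz⟩ := hx
  have hd : ∀ a b : E, ‖γ a - γ b‖ = ‖a - b‖ := fun a b => by
    rw [← dist_eq_norm, ← dist_eq_norm, hγ.dist_eq]
  set v := γ x - x with hvdef
  have hxv : ‖x - γ x‖ = ‖v‖ := by rw [hvdef, norm_sub_rev]
  have hvn : (0:ℝ) < ‖v‖ := lt_of_le_of_lt (norm_nonneg _) (hxv ▸ hz)
  have hv : v ≠ 0 := norm_pos_iff.mp hvn
  rintro y ⟨a, t, ha, ht0, hab, rfl⟩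
  have hyx : a • x + t • γ x = x + t • v := by
    rw [hvdef]
    have h : a = 1 - t := by linarith
    rw [h]; module
  rw [hyx]
  set y := x + t • v with hydef
  have ht1 : t < 1 := by linarith
  by_contra hcon
  push_neg at hcon
  have hle : ‖y - γ y‖ ≤ ‖v‖ := by
    calc ‖y - γ y‖ = ‖(y - γ x) + (γ x - γ y)‖ := by congr 1; abel
    _ ≤ ‖y - γ x‖ + ‖γ x - γ y‖ := norm_add_le _ _
    _ = ‖(t - 1) • v‖ + ‖x - y‖ := by
        rw [hd]; congr 2; rw [hydef, hvdef]; module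
    _ = (1 - t) * ‖v‖ + t * ‖v‖ := by
        rw [norm_smul, Real.norm_eq_abs, abs_of_neg (by linarith : t - 1 < 0)]
        congr 1
        · ring
        · have h : x - y = -(t • v) := by rw [hydef]; module
          rw [h, norm_neg, norm_smul, Real.norm_eq_abs, abs_of_pos ht0]
    _ = ‖v‖ := by ring
  have heq : ‖y - γ y‖ = ‖v‖ := le_antisymm hle (hxv ▸ hcon)
  -- displacement of every iterate of y is ‖v‖
  have hdisp : ∀ n : ℕ, ‖γ^[n] y - γ (γ^[n] y)‖ = ‖v‖ := by
    intro n
    induction n with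
    | zero => simpa using heq
    | succ m ihm =>
      rw [Function.iterate_succ_apply' γ m y, hd]
      exact ihm
  -- inductive propagation along the orbit
  have key : ∀ n : ℕ, γ^[n+1] x = γ^[n] x + v ∧ γ^[n] y = γ^[n] x + t • v := by
    intro n
    induction n with
    | zero =>
      refine ⟨?_, by simpa using hydef⟩
      simp only [Function.iterate_one, Function.iterate_zero, id_eq]
      rw [hvdef]
      abel
    | succ n ih =>
      obtain ⟨ih1, ih2⟩ := ih
      have hvx : γ (γ^[n] x) - γ^[n] x = v := by
        rw [← Function.iterate_succ_apply' γ n x, ih1]; abel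
      have hne : γ (γ^[n] x) - γ^[n] x ≠ 0 := by rw [hvx]; exact hv
      have harg : γ^[n] x + t • (γ (γ^[n] x) - γ^[n] x) = γ^[n] y := by
        rw [hvx, ih2]
      have hyd' : ‖(γ^[n] x + t • (γ (γ^[n] x) - γ^[n] x)) -
          γ (γ^[n] x + t • (γ (γ^[n] x) - γ^[n] x))‖ = ‖γ (γ^[n] x) - γ^[n] x‖ := by
        rw [harg, hvx]; exact hdisp n
      obtain ⟨k1, k2⟩ := stmt_9_key γ hγ (γ^[n] x) t ht0 ht1 hne hyd'
      rw [harg] at k1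
      rw [hvx] at k1 k2
      constructor
      · rw [Function.iterate_succ_apply' γ (n+1) x, Function.iterate_succ_apply' γ n x, k2,
          ← Function.iterate_succ_apply' γ n x]
      · rw [Function.iterate_succ_apply' γ n y, k1, ← Function.iterate_succ_apply' γ n x,
          ih1]
  -- hence γ^[n] x = x + n • v
  have xiter : ∀ n : ℕ, γ^[n] x = x + (n : ℝ) • v := by
    intro n
    induction n with
    | zero => simp
    | succ n ih =>
      rw [(key n).1, ih, Nat.cast_succ]
      module
  -- iterates of isometry are isometric
  have hdit : ∀ (n : ℕ) (a b : E), ‖γ^[n] a - γ^[n] b‖ = ‖a - b‖ := by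
    intro n
    induction n with
    | zero => simp
    | succ n ih =>
      intro a b
      rw [Function.iterate_succ_apply' γ n a, Function.iterate_succ_apply' γ n b, hd]
      exact ih a b
  -- displacement of z iterates grows at most linearly
  have hzit : ∀ n : ℕ, ‖γ^[n] z - z‖ ≤ (n : ℝ) * ‖z - γ z‖ := by
    intro n
    induction n with
    | zero => simp
    | succ n ih =>
      calc ‖γ^[n+1] z - z‖ ≤ ‖γ^[n+1] z - γ^[n] z‖ + ‖γ^[n] z - z‖ :=
            norm_sub_le_norm_sub_add_norm_sub _ _ _
      _ = ‖γ z - z‖ + ‖γ^[n] z - z‖ := by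
            rw [Function.iterate_succ_apply γ n z, hdit n (γ z) z]
      _ ≤ ‖z - γ z‖ + (n : ℝ) * ‖z - γ z‖ := by
            rw [norm_sub_rev (γ z) z]; linarith
      _ = ((n + 1 : ℕ) : ℝ) * ‖z - γ z‖ := by push_cast; ring
  -- final contradiction using z
  have hzlt : ‖z - γ z‖ < ‖v‖ := hxv ▸ hz
  obtain ⟨n, hn⟩ := exists_nat_gt ((2 * ‖x - z‖) / (‖v‖ - ‖z - γ z‖))
  have hnn : (2 * ‖x - z‖) < (n : ℝ) * (‖v‖ - ‖z - γ z‖) := by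
    rw [div_lt_iff₀ (by linarith)] at hn
    linarith [hn]
  have hbig : (n : ℝ) * ‖v‖ ≤ 2 * ‖x - z‖ + (n : ℝ) * ‖z - γ z‖ := by
    have h1 : ‖γ^[n] x - x‖ = (n : ℝ) * ‖v‖ := by
      rw [xiter n]
      have h : x + (n : ℝ) • v - x = (n : ℝ) • v := by abel
      rw [h, norm_smul, Real.norm_eq_abs, abs_of_nonneg (Nat.cast_nonneg n)]
    calc (n : ℝ) * ‖v‖ = ‖γ^[n] x - x‖ := h1.symm
    _ ≤ ‖γ^[n] x - γ^[n] z‖ + ‖γ^[n] z - z‖ + ‖z - x‖ := by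
        have := norm_sub_le_norm_sub_add_norm_sub (γ^[n] x) (γ^[n] z) x
        have := norm_sub_le_norm_sub_add_norm_sub (γ^[n] z) z x
        linarith
    _ = ‖x - z‖ + ‖γ^[n] z - z‖ + ‖x - z‖ := by
        rw [hdit n x z, norm_sub_rev z x]
    _ ≤ 2 * ‖x - z‖ + (n : ℝ) * ‖z - γ z‖ := by linarith [hzit n]
  linarith
end

section
/- Let E be a strictly convex real normed vector space and γ : E → E an isometry. Suppose the displacement function d_γ(y) = ‖y − γ y‖ attains a local minimum at x ∈ E, i.e. there exists ε > 0 such that ‖x − γ x‖ ≤ ‖y − γ y‖ for all y ∈ E with ‖y − x‖ < ε. Then x is a global minimum of d_γ: for every z ∈ E, ‖x − γ x‖ ≤ ‖z − γ z‖. -/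
theorem stmt_10 {E : Type*} [NormedAddCommGroup E] [NormedSpace ℝ E] [StrictConvexSpace ℝ E]
    (γ : E → E) (hγ : Isometry γ) (x : E)
    (hloc : ∃ ε > 0, ∀ y : E, ‖y - x‖ < ε → ‖x - γ x‖ ≤ ‖y - γ y‖) :
    ∀ z : E, ‖x - γ x‖ ≤ ‖z - γ z‖ := by
  obtain ⟨ε, hε, hmin⟩ := hloc
  intro z
  set A : E →ᵃ[ℝ] E := hγ.affineIsometryOfStrictConvexSpace.toAffineMap with hA
  have hAp : ∀ p : E, A p = γ p := fun p => rfl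
  set t : ℝ := min (ε / (2 * (‖z - x‖ + 1))) (1 / 2) with ht
  have hzx : (0 : ℝ) < ‖z - x‖ + 1 := by positivity
  have ht0 : 0 < t := lt_min (by positivity) (by norm_num)
  have ht1 : t ≤ 1 / 2 := min_le_right _ _
  set y : E := AffineMap.lineMap x z t with hy
  have hyx : y - x = t • (z - x) := by
    simp [hy, AffineMap.lineMap_apply, vsub_eq_sub, vadd_eq_add]
  have hylt : ‖y - x‖ < ε := by
    rw [hyx, norm_smul, Real.norm_eq_abs, abs_of_pos ht0]
    have h1 : t ≤ ε / (2 * (‖z - x‖ + 1)) := min_le_left _ _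
    have h2 : ‖z - x‖ ≥ 0 := norm_nonneg _
    have h3 : ε / (2 * (‖z - x‖ + 1)) * ‖z - x‖ < ε := by
      rw [div_mul_eq_mul_div, div_lt_iff₀ (by positivity)]
      nlinarith
    calc t * ‖z - x‖ ≤ ε / (2 * (‖z - x‖ + 1)) * ‖z - x‖ := by nlinarith
      _ < ε := h3
  have hγy : γ y = AffineMap.lineMap (γ x) (γ z) t := by
    rw [← hAp, ← hAp x, ← hAp z, hy, AffineMap.apply_lineMap]
  have hkey : y - γ y = (1 - t) • (x - γ x) + t • (z - γ z) := by
    rw [hγy, hy]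
    simp only [AffineMap.lineMap_apply, vsub_eq_sub, vadd_eq_add, smul_sub, sub_smul, one_smul]
    abel
  have hconv : ‖y - γ y‖ ≤ (1 - t) * ‖x - γ x‖ + t * ‖z - γ z‖ := by
    rw [hkey]
    calc ‖(1 - t) • (x - γ x) + t • (z - γ z)‖
        ≤ ‖(1 - t) • (x - γ x)‖ + ‖t • (z - γ z)‖ := norm_add_le _ _
      _ = (1 - t) * ‖x - γ x‖ + t * ‖z - γ z‖ := by
          rw [norm_smul, norm_smul, Real.norm_eq_abs, Real.norm_eq_abs,
            abs_of_pos ht0, abs_of_nonneg (by linarith : (0:ℝ) ≤ 1 - t)]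
  have hle : ‖x - γ x‖ ≤ ‖y - γ y‖ := hmin y hylt
  nlinarith
end

section
/- Let E be a strictly convex real normed vector space and γ : E → E an isometry. Let x ∈ E be such that γ x lies in the closed segment [x, γ² x]. Then for every natural number n, ‖x − γⁿ x‖ = n · ‖x − γ x‖. -/
private lemma iso_iter {E : Type*} [NormedAddCommGroup E] {γ : E → E} (hγ : Isometry γ) :
    ∀ n : ℕ, Isometry (γ^[n])
  | 0 => by simpa using isometry_id
  | n+1 => by rw [Function.iterate_succ]; exact (iso_iter hγ n).comp hγ

theorem stmt_11 {E : Type*} [NormedAddCommGroup E] [NormedSpace ℝ E] [StrictConvexSpace ℝ E]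
    (γ : E → E) (hγ : Isometry γ) (x : E)
    (hx : γ x ∈ segment ℝ x (γ (γ x))) :
    ∀ n : ℕ, ‖x - γ^[n] x‖ = n * ‖x - γ x‖ := by
  have hdist := dist_add_dist_of_mem_segment hx
  -- all increments have the same norm
  have hnorm : ∀ n : ℕ, ‖γ^[n+1] x - γ^[n] x‖ = ‖γ x - x‖ := by
    intro n
    have := (iso_iter hγ n).dist_eq (γ x) x
    simpa [dist_eq_norm, Function.iterate_succ_apply] using this
  -- key: increments are constant
  have hstep : ∀ n : ℕ, γ^[n+1] x - γ^[n] x = γ x - x := by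
    intro n
    induction n with
    | zero => simp
    | succ n ih =>
      set a := γ^[n+1] x - γ^[n] x with ha
      set b := γ^[n+2] x - γ^[n+1] x with hb
      have hsum : ‖b + a‖ = ‖b‖ + ‖a‖ := by
        have h2 : ‖γ^[n+2] x - γ^[n] x‖ = ‖γ (γ x) - x‖ := by
          have := (iso_iter hγ n).dist_eq (γ (γ x)) x
          simpa [dist_eq_norm, Function.iterate_succ_apply] using this
        have h3 : ‖γ (γ x) - x‖ = ‖γ x - x‖ + ‖γ x - x‖ := by
          have h4 : ‖x - γ x‖ + ‖γ x - γ (γ x)‖ = ‖x - γ (γ x)‖ := by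
            simpa [dist_eq_norm] using hdist
          have h5 : ‖γ x - γ (γ x)‖ = ‖x - γ x‖ := by
            simpa [dist_eq_norm] using hγ.dist_eq x (γ x)
          calc ‖γ (γ x) - x‖ = ‖x - γ (γ x)‖ := (norm_sub_rev _ _)
            _ = ‖x - γ x‖ + ‖γ x - γ (γ x)‖ := h4.symm
            _ = ‖γ x - x‖ + ‖γ x - x‖ := by
                rw [h5, norm_sub_rev x (γ x)]
        have hba : b + a = γ^[n+2] x - γ^[n] x := by rw [ha, hb]; abel
        rw [hba, h2, h3, hnorm, hnorm]
      have hab : ‖b‖ = ‖a‖ := by rw [hnorm, hnorm]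
      have := eq_of_norm_eq_of_norm_add_eq hab hsum
      rw [this, ha] at *
      exact ih
  -- telescoping
  have htel : ∀ n : ℕ, γ^[n] x - x = (n : ℝ) • (γ x - x) := by
    intro n
    induction n with
    | zero => simp
    | succ n ih =>
      have : γ^[n+1] x - x = (γ^[n+1] x - γ^[n] x) + (γ^[n] x - x) := by abel
      rw [this, hstep, ih, Nat.cast_succ, add_smul, one_smul]; abel
  intro n
  rw [norm_sub_rev, ← sub_sub_self x (γ^[n] x)]
  have : x - (x - γ^[n] x) - x = γ^[n] x - x := by abel
  rw [this, htel, norm_smul, norm_sub_rev x (γ x)]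
  simp
end

section
/- Let E be a strictly convex real normed vector space and γ : E → E an isometry. Let x ∈ E be such that γ x lies in the closed segment [x, γ² x]. Then x realizes the minimal displacement of γ: for every z ∈ E, ‖x − γ x‖ ≤ ‖z − γ z‖. -/
theorem stmt_12 {E : Type*} [NormedAddCommGroup E] [NormedSpace ℝ E] [StrictConvexSpace ℝ E]
    (γ : E → E) (hγ : Isometry γ) (x : E)
    (hx : γ x ∈ segment ℝ x (γ (γ x))) :
    ∀ z : E, ‖x - γ x‖ ≤ ‖z - γ z‖ := by
  intro z
  set d : ℝ := ‖x - γ x‖ with hd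
  have hiter : ∀ n : ℕ, Isometry (γ^[n]) := by
    intro n
    induction n with
    | zero => exact isometry_id
    | succ n ih => rw [Function.iterate_succ]; exact ih.comp hγ
  -- distances between consecutive iterates are d
  have hcons : ∀ n : ℕ, ‖γ^[n] x - γ^[n + 1] x‖ = d := by
    intro n
    have := (hiter n).dist_eq x (γ x)
    simp only [dist_eq_norm] at this
    simpa [Function.iterate_succ_apply', Function.iterate_succ_apply,
      ← Function.Commute.iterate_self γ n x] using this
  -- the two-step distance is 2d
  have h2 : ‖x - γ (γ x)‖ = 2 * d := by
    have hxy := dist_add_dist_of_mem_segment hx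
    rw [hγ.dist_eq x (γ x)] at hxy
    simp only [dist_eq_norm] at hxy
    rw [← hxy]; ring
  have h2' : ∀ n : ℕ, ‖γ^[n] x - γ^[n + 2] x‖ = 2 * d := by
    intro n
    have := (hiter n).dist_eq x (γ (γ x))
    simp only [dist_eq_norm] at this
    rw [show γ^[n] (γ (γ x)) = γ^[n + 2] x by
      rw [← Function.iterate_succ_apply γ, ← Function.iterate_succ_apply γ,
        Function.iterate_succ_apply', Function.iterate_succ_apply']] at this
    rw [this, h2]
  -- consecutive difference vectors are all equal
  have hstep : ∀ n : ℕ, γ^[n + 2] x - γ^[n + 1] x = γ^[n + 1] x - γ^[n] x := by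
    intro n
    have hu : ‖γ^[n + 1] x - γ^[n] x‖ = d := by rw [norm_sub_rev]; exact hcons n
    have hw : ‖γ^[n + 2] x - γ^[n + 1] x‖ = d := by rw [norm_sub_rev]; exact hcons (n + 1)
    have hsum : ‖(γ^[n + 2] x - γ^[n + 1] x) + (γ^[n + 1] x - γ^[n] x)‖
        = ‖γ^[n + 2] x - γ^[n + 1] x‖ + ‖γ^[n + 1] x - γ^[n] x‖ := by
      rw [hu, hw]
      have : (γ^[n + 2] x - γ^[n + 1] x) + (γ^[n + 1] x - γ^[n] x) = γ^[n + 2] x - γ^[n] x := by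
        abel
      rw [this, norm_sub_rev, h2' n]; ring
    exact eq_of_norm_eq_of_norm_add_eq (hw.trans hu.symm) hsum
  -- hence γ^[n] x = x + n • (γ x - x)
  have hdiff : ∀ n : ℕ, γ^[n + 1] x - γ^[n] x = γ x - x := by
    intro n
    induction n with
    | zero => simp
    | succ m ihm => rw [hstep m, ihm]
  have hlin : ∀ n : ℕ, γ^[n] x = x + (n : ℝ) • (γ x - x) := by
    intro n
    induction n with
    | zero => simp
    | succ n ih =>
      have h : γ^[n + 1] x = γ^[n] x + (γ x - x) := by rw [← hdiff n]; abel
      rw [h, ih]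
      push_cast [add_smul, one_smul]
      abel
  have hnorm : ∀ n : ℕ, ‖x - γ^[n] x‖ = n * d := by
    intro n
    rw [hlin n]
    have : x - (x + (n : ℝ) • (γ x - x)) = (n : ℝ) • (x - γ x) := by
      rw [smul_sub, smul_sub]; abel
    rw [this, norm_smul, Real.norm_natCast, hd]
  -- displacement of z bounds
  have hz : ∀ n : ℕ, ‖z - γ^[n] z‖ ≤ n * ‖z - γ z‖ := by
    intro n
    induction n with
    | zero => simp
    | succ n ih =>
      have h1 : ‖z - γ^[n + 1] z‖ ≤ ‖z - γ^[n] z‖ + ‖γ^[n] z - γ^[n + 1] z‖ :=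
        norm_sub_le_norm_sub_add_norm_sub _ _ _
      have h2 : ‖γ^[n] z - γ^[n + 1] z‖ = ‖z - γ z‖ := by
        have := (hiter n).dist_eq z (γ z)
        simp only [dist_eq_norm] at this
        simpa [Function.iterate_succ_apply] using this
      push_cast [add_mul, one_mul]
      linarith
  -- conclude
  by_contra hc
  push_neg at hc
  set e := ‖z - γ z‖
  have hpos : 0 < d - e := by simp only [e] at hc ⊢; linarith
  obtain ⟨n, hn⟩ := exists_nat_gt ((2 * ‖x - z‖) / (d - e))
  have hkey : (n : ℝ) * d ≤ 2 * ‖x - z‖ + n * e := by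
    have t1 : ‖x - γ^[n] x‖ ≤ ‖x - z‖ + ‖z - γ^[n] z‖ + ‖γ^[n] z - γ^[n] x‖ := by
      calc ‖x - γ^[n] x‖ ≤ ‖x - γ^[n] z‖ + ‖γ^[n] z - γ^[n] x‖ :=
            norm_sub_le_norm_sub_add_norm_sub _ _ _
        _ ≤ ‖x - z‖ + ‖z - γ^[n] z‖ + ‖γ^[n] z - γ^[n] x‖ := by
            have := norm_sub_le_norm_sub_add_norm_sub x z (γ^[n] z)
            linarith
    have t2 : ‖γ^[n] z - γ^[n] x‖ = ‖z - x‖ := by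
      have := (hiter n).dist_eq z x
      simpa [dist_eq_norm] using this
    have t3 := hz n
    rw [hnorm n] at t1
    rw [t2, norm_sub_rev z x] at t1
    simp only [e]
    linarith
  have : (n : ℝ) * (d - e) ≤ 2 * ‖x - z‖ := by linarith [hkey]
  have := (div_lt_iff₀ hpos).mp hn
  linarith
end
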